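/- Let T be a stress-energy tensor on (N+1)-dimensional Minkowski space satisfying the dominant energy condition. Let V be a future-directed timelike vector normalized so that η(V,V) = -1, and let A be a vector with η(V,A) = 0. Then |T(V,A)| ≤ √(η(A,A)) · T(V,V). -/

import Mathlib

/-!
For every `c > √η(A,A)` the vectors `cV ± A` are timelike, and future-directed because their
product with `V` is `-c < 0`. By the dominant energy condition their images under `u` lie in the
closed future cone, so by the reverse Cauchy–Schwarz inequality they have nonpositive product
with `V`; that is, `T(V, cV ± A) ≥ 0`, or `|T(V,A)| ≤ c T(V,V)`. Let `c` decrease to `√η(A,A)`.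
-/

open Matrix

/-- The Minkowski metric `diag(-1,1,…,1)` on `ℝ^{N+1}`. -/
noncomputable def eta (N : ℕ) : Matrix (Fin (N+1)) (Fin (N+1)) ℝ :=
  Matrix.diagonal (fun i => if i = 0 then (-1 : ℝ) else 1)

/-- The Minkowski bilinear form `η(x,y) = -x₀y₀ + ∑ᵢ xᵢyᵢ`. -/
noncomputable def mdot {N : ℕ} (x y : Fin (N+1) → ℝ) : ℝ :=
  x ⬝ᵥ (eta N).mulVec y

/-- Future-directed timelike: `η(v,v) < 0` and `v₀ > 0`. -/
def FDTimelike {N : ℕ} (v : Fin (N+1) → ℝ) : Prop :=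
  mdot v v < 0 ∧ 0 < v 0

/-- Future-directed lightlike: `v ≠ 0`, `η(v,v) = 0` and `v₀ > 0`. -/
def FDLightlike {N : ℕ} (v : Fin (N+1) → ℝ) : Prop :=
  v ≠ 0 ∧ mdot v v = 0 ∧ 0 < v 0

/-- Future-directed causal: future-directed timelike or lightlike. -/
def FDCausal {N : ℕ} (v : Fin (N+1) → ℝ) : Prop :=
  FDTimelike v ∨ FDLightlike v

/-- The bilinear form associated to a matrix: `T(v,w) = vᵀ T w`. -/
noncomputable def Tbil {N : ℕ} (T : Matrix (Fin (N+1)) (Fin (N+1)) ℝ)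
    (v w : Fin (N+1) → ℝ) : ℝ :=
  v ⬝ᵥ T.mulVec w

/-- The endomorphism associated to a stress-energy tensor: `u(v) = -ηTv`. -/
noncomputable def endo {N : ℕ} (T : Matrix (Fin (N+1)) (Fin (N+1)) ℝ)
    (v : Fin (N+1) → ℝ) : Fin (N+1) → ℝ :=
  -((eta N).mulVec (T.mulVec v))

/-- The dominant energy condition: every future-directed causal vector is
sent by the associated endomorphism to a future-directed causal vector or zero. -/
def DEC {N : ℕ} (T : Matrix (Fin (N+1)) (Fin (N+1)) ℝ) : Prop :=
  ∀ v : Fin (N+1) → ℝ, FDCausal v → FDCausal (endo T v) ∨ endo T v = 0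

open Filter Topology

lemma mdot_apply {N : ℕ} (x y : Fin (N+1) → ℝ) :
    mdot x y = -(x 0 * y 0) + ∑ i : Fin N, x i.succ * y i.succ := by
  simp [mdot, eta, mulVec_diagonal, dotProduct, Fin.sum_univ_succ, Fin.succ_ne_zero]

lemma mdot_comm {N : ℕ} (x y : Fin (N+1) → ℝ) : mdot x y = mdot y x := by
  simp only [mdot_apply, mul_comm]

@[simp]
lemma mdot_neg_left {N : ℕ} (x y : Fin (N+1) → ℝ) : mdot (-x) y = -mdot x y := by
  simp [mdot]

@[simp]
lemma mdot_neg_right {N : ℕ} (x y : Fin (N+1) → ℝ) : mdot x (-y) = -mdot x y := by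
  simp [mdot, mulVec_neg]

@[simp]
lemma mdot_smul_add_left {N : ℕ} (c : ℝ) (x y z : Fin (N+1) → ℝ) :
    mdot (c • x + y) z = c * mdot x z + mdot y z := by
  simp [mdot, add_dotProduct]

@[simp]
lemma mdot_smul_add_right {N : ℕ} (c : ℝ) (x y z : Fin (N+1) → ℝ) :
    mdot x (c • y + z) = c * mdot x y + mdot x z := by
  simp [mdot, mulVec_add, mulVec_smul, dotProduct_add]

@[simp]
lemma tbil_smul_add_right {N : ℕ} (T : Matrix (Fin (N+1)) (Fin (N+1)) ℝ) (c : ℝ)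
    (v w z : Fin (N+1) → ℝ) : Tbil T v (c • w + z) = c * Tbil T v w + Tbil T v z := by
  simp [Tbil, mulVec_add, mulVec_smul, dotProduct_add]

@[simp]
lemma tbil_neg_right {N : ℕ} (T : Matrix (Fin (N+1)) (Fin (N+1)) ℝ) (v w : Fin (N+1) → ℝ) :
    Tbil T v (-w) = -Tbil T v w := by
  simp [Tbil, mulVec_neg]

-- Reverse Cauchy–Schwarz inequality for the closed future cone.
lemma mdot_nonpos_of_future {N : ℕ} {u v : Fin (N+1) → ℝ}
    (hu₀ : 0 ≤ u 0) (hu : mdot u u ≤ 0) (hv₀ : 0 ≤ v 0) (hv : mdot v v ≤ 0) :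
    mdot u v ≤ 0 := by
  rw [mdot_apply] at hu hv ⊢
  have hcs := Finset.sum_mul_sq_le_sq_mul_sq Finset.univ
    (fun i : Fin N => u i.succ) (fun i : Fin N => v i.succ)
  have hu' : ∑ i : Fin N, u i.succ ^ 2 ≤ u 0 ^ 2 := by simp only [sq]; linarith
  have hv' : ∑ i : Fin N, v i.succ ^ 2 ≤ v 0 ^ 2 := by simp only [sq]; linarith
  have hsq : (∑ i : Fin N, u i.succ * v i.succ) ^ 2 ≤ (u 0 * v 0) ^ 2 :=
    hcs.trans <| mul_pow (u 0) (v 0) 2 ▸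
      mul_le_mul hu' hv' (Finset.sum_nonneg fun _ _ => sq_nonneg _) (sq_nonneg _)
  linarith [(abs_le_of_sq_le_sq' hsq (mul_nonneg hu₀ hv₀)).2]

lemma zero_lt_of_mdot_neg {N : ℕ} {w v : Fin (N+1) → ℝ} (hw : mdot w w < 0)
    (hv₀ : 0 ≤ v 0) (hv : mdot v v ≤ 0) (hwv : mdot w v < 0) : 0 < w 0 := by
  by_contra! hw₀
  have := mdot_nonpos_of_future (u := -w) (by simpa using hw₀) (by simpa using hw.le) hv₀ hv
  simp only [mdot_neg_left] at this
  linarith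

lemma FDCausal.zero_le {N : ℕ} {u : Fin (N+1) → ℝ} (hu : FDCausal u) : 0 ≤ u 0 := by
  rcases hu with ⟨-, hu₀⟩ | ⟨-, -, hu₀⟩ <;> exact hu₀.le

lemma FDCausal.mdot_self_nonpos {N : ℕ} {u : Fin (N+1) → ℝ} (hu : FDCausal u) :
    mdot u u ≤ 0 := by
  rcases hu with ⟨huu, -⟩ | ⟨-, huu, -⟩ <;> exact huu.le

lemma eta_transpose (N : ℕ) : (eta N)ᵀ = eta N :=
  diagonal_transpose _

lemma eta_mul_eta (N : ℕ) : eta N * eta N = 1 := by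
  rw [eta, diagonal_mul_diagonal, ← diagonal_one]
  congr 1
  ext i
  split_ifs <;> norm_num

lemma mdot_endo {N : ℕ} (T : Matrix (Fin (N+1)) (Fin (N+1)) ℝ) (v w : Fin (N+1) → ℝ) :
    mdot (endo T v) w = -Tbil T w v := by
  rw [mdot, endo, Tbil, neg_dotProduct, dotProduct_mulVec, ← vecMul_transpose, eta_transpose,
    vecMul_vecMul, eta_mul_eta, vecMul_one, dotProduct_comm]

lemma DEC.tbil_nonneg {N : ℕ} {T : Matrix (Fin (N+1)) (Fin (N+1)) ℝ} (hT : DEC T)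
    {v w : Fin (N+1) → ℝ} (hv₀ : 0 ≤ v 0) (hv : mdot v v ≤ 0) (hw : FDCausal w) :
    0 ≤ Tbil T v w := by
  have h : mdot (endo T w) v ≤ 0 := by
    rcases hT w hw with hu | hu
    · exact mdot_nonpos_of_future hu.zero_le hu.mdot_self_nonpos hv₀ hv
    · simp [hu, mdot]
  rw [mdot_endo] at h
  linarith

lemma fdTimelike_smul_add {N : ℕ} {V A : Fin (N+1) → ℝ} (hV₀ : 0 ≤ V 0)
    (hVV : mdot V V = -1) (hVA : mdot V A = 0) {c : ℝ} (hc : 0 < c) (hA : mdot A A < c ^ 2) :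
    FDTimelike (c • V + A) := by
  have hAV : mdot A V = 0 := by rw [mdot_comm, hVA]
  have hWV : mdot (c • V + A) V = -c := by simp [hVV, hAV]
  have hWW : mdot (c • V + A) (c • V + A) < 0 := by
    simp only [mdot_smul_add_left, mdot_smul_add_right, hVV, hVA, hAV]
    nlinarith
  exact ⟨hWW, zero_lt_of_mdot_neg hWW hV₀ (by linarith) (by linarith)⟩

theorem dec_ineq_one_general {N : ℕ}
    (T : Matrix (Fin (N+1)) (Fin (N+1)) ℝ)
    (hdec : DEC T)
    (V : Fin (N+1) → ℝ) (hV : FDTimelike V) (hVnorm : mdot V V = -1)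
    (A : Fin (N+1) → ℝ) (horth : mdot V A = 0) :
    |Tbil T V A| ≤ Real.sqrt (mdot A A) * Tbil T V V := by
  have hV₀ : 0 ≤ V 0 := hV.2.le
  have hVV : mdot V V ≤ 0 := by linarith
  have hbound : ∀ c, Real.sqrt (mdot A A) < c → |Tbil T V A| ≤ c * Tbil T V V := by
    intro c hc
    have hc₀ : 0 < c := (Real.sqrt_nonneg _).trans_lt hc
    have hA : mdot A A < c ^ 2 := (Real.sqrt_lt' hc₀).1 hc
    have hplus := hdec.tbil_nonneg hV₀ hVV <| .inl <| fdTimelike_smul_add hV₀ hVnorm horth hc₀ hA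
    have hminus := hdec.tbil_nonneg hV₀ hVV <| .inl <|
      fdTimelike_smul_add hV₀ hVnorm (A := -A) (by simpa using horth) hc₀ (by simpa using hA)
    simp only [tbil_smul_add_right, tbil_neg_right] at hplus hminus
    rw [abs_le]
    constructor <;> linarith
  refine ge_of_tendsto (x := 𝓝[>] √(mdot A A)) ?_ (eventually_nhdsWithin_of_forall hbound)
  exact ((continuous_id.mul continuous_const).tendsto _).mono_left nhdsWithin_le_nhds

/-- Inequality (1): `|T(V,A)| ≤ |A| ⬝ T(V,V)` for `V` unit timelike and
`A` orthogonal to `V`. -/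
theorem dec_ineq_one {N : ℕ} (hN : 1 ≤ N)
    (T : Matrix (Fin (N+1)) (Fin (N+1)) ℝ) (hsymm : T.IsSymm)
    (hdec : DEC T)
    (V : Fin (N+1) → ℝ) (hV : FDTimelike V) (hVnorm : mdot V V = -1)
    (A : Fin (N+1) → ℝ) (horth : mdot V A = 0) :
    |Tbil T V A| ≤ Real.sqrt (mdot A A) * Tbil T V V :=
  dec_ineq_one_general T hdec V hV hVnorm A horth
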